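/- arXiv:2205.01442 — 2 statements merged into one kernel-verified Lean document; each statement's English description precedes it below -/
import Mathlib

section
/- Suppose φ : ℝ^d → ℝ is supermodular on the box [f^L,f^U] and the maps u, a satisfy the bounding system below on X. Then for every direction vector ω and every x ∈ X, φ(f_1(x),…,f_d(x)) ≤ B^ω(φ)(u(x), a(x)). -/
/-!
Replace the under-estimators `u_i` by the monotone `v_{i,j} = min (f_i, a_{i,j})`, which still
runs from `a_{i,0}` to `f_i`. Along the staircase `p^0, …, p^{dn}`, supermodularity bounds each
increment `φ(Π(v;p^t)) - φ(Π(v;p^{t-1}))` by the corresponding summand of `B^ω(φ)(v,a)`, so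
`φ(f) ≤ B^ω(φ)(v,a)` by telescoping. Passing from `v` back to `u ≤ v` only increases `B^ω`:
the gaps `φ(Π((a_{-j},v_j);p^t)) - φ(Π((a_{-j},u_j);p^t))` increase in `t` while the staircase
moves in a direction other than `j`, and vanish at both ends of the staircase, where `u_j = v_j`.
-/

open Finset

noncomputable section

/-- A direction vector: each value `i ∈ {1,…,d}` occurs exactly `n` times. -/
def IsDirVec (d n : ℕ) (ω : Fin (d * n) → Fin d) : Prop :=
  ∀ i : Fin d, (Finset.univ.filter (fun t => ω t = i)).card = n

/-- The grid point reached after the first `t` moves of the staircase determined by `ω`: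
its `i`-th coordinate is the number of moves among the first `t` in direction `i`. -/
def gridPt (d n : ℕ) (ω : Fin (d * n) → Fin d) (t : ℕ) (i : Fin d) : ℕ :=
  (Finset.univ.filter (fun t' : Fin (d * n) => (t' : ℕ) < t ∧ ω t' = i)).card

/-- The staircase over-estimator `B^ω(φ)(u,a)`. -/
def Bstep (d n : ℕ) (φ : (Fin d → ℝ) → ℝ) (ω : Fin (d * n) → Fin d)
    (u a : Fin d → ℕ → ℝ) : ℝ :=
  φ (fun i => a i 0) +
    ∑ t : Fin (d * n),
      (φ (fun i => if i = ω t then u i (gridPt d n ω ((t : ℕ) + 1) i)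
            else a i (gridPt d n ω ((t : ℕ) + 1) i)) -
        φ (fun i => if i = ω t then u i (gridPt d n ω (t : ℕ) i)
            else a i (gridPt d n ω (t : ℕ) i)))

def SupermodularOn {α : Type*} [Lattice α] (φ : α → ℝ) (S : Set α) : Prop :=
  ∀ y ∈ S, ∀ z ∈ S, φ y + φ z ≤ φ (y ⊔ z) + φ (y ⊓ z)

lemma Fin.sum_univ_sub_telescope {G : Type*} [AddCommGroup G] (g : ℕ → G) (N : ℕ) :
    ∑ t : Fin N, (g (t + 1) - g t) = g N - g 0 :=
  (Fin.sum_univ_eq_sum_range (fun t => g (t + 1) - g t) N).trans (sum_range_sub g N)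

section MixedPoint

variable {ι : Type*} [DecidableEq ι]

/-- `Π((a_{-j}, w_j); p)`. -/
def mixedPt (w a : ι → ℕ → ℝ) (j : ι) (p : ι → ℕ) : ι → ℝ :=
  fun l => if l = j then w l (p l) else a l (p l)

lemma mixedPt_self (w : ι → ℕ → ℝ) (j : ι) (p : ι → ℕ) :
    mixedPt w w j p = fun l => w l (p l) :=
  funext fun _ => ite_self _

lemma mixedPt_congr_left {w w' a : ι → ℕ → ℝ} {j : ι} {p : ι → ℕ}
    (h : w j (p j) = w' j (p j)) :
    mixedPt w a j p = mixedPt w' a j p := by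
  funext l
  unfold mixedPt
  split_ifs with hl
  · exact hl ▸ h
  · rfl

variable {lo hi : ι → ℝ} {n : ℕ} {p q : ι → ℕ}

lemma mixedPt_mem_Icc {w a : ι → ℕ → ℝ} (hp : ∀ l, p l ≤ n)
    (hw : ∀ l, ∀ k ≤ n, w l k ∈ Set.Icc (lo l) (hi l))
    (ha : ∀ l, ∀ k ≤ n, a l k ∈ Set.Icc (lo l) (hi l)) (j : ι) :
    mixedPt w a j p ∈ Set.Icc lo hi := by
  rw [← Set.pi_univ_Icc]
  intro l _
  unfold mixedPt
  split_ifs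
  exacts [hw l _ (hp l), ha l _ (hp l)]

variable {φ : (ι → ℝ) → ℝ}

lemma SupermodularOn.sub_le_sub_mixedPt (hφ : SupermodularOn φ (Set.Icc lo hi))
    {V A : ι → ℕ → ℝ} {i : ι} (hpq : p ≤ q) (hq : ∀ l ≠ i, q l = p l) (hqn : ∀ l, q l ≤ n)
    (hV : ∀ l, MonotoneOn (V l) (Set.Iic n)) (hVA : ∀ l, ∀ k ≤ n, V l k ≤ A l k)
    (hVbox : ∀ l, ∀ k ≤ n, V l k ∈ Set.Icc (lo l) (hi l))
    (hAbox : ∀ l, ∀ k ≤ n, A l k ∈ Set.Icc (lo l) (hi l)) :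
    φ (fun l => V l (q l)) - φ (fun l => V l (p l)) ≤
      φ (mixedPt V A i q) - φ (mixedPt V A i p) := by
  have hpn : ∀ l, p l ≤ n := fun l => (hpq l).trans (hqn l)
  have hVpq : ∀ l, V l (p l) ≤ V l (q l) := fun l => hV l (hpn l) (hqn l) (hpq l)
  have hsup : (fun l => V l (q l)) ⊔ mixedPt V A i p = mixedPt V A i q := by
    funext l
    by_cases hl : l = i
    · simp [mixedPt, hl, hVpq i]
    · simp [mixedPt, hl, hq l hl, hVA l _ (hpn l)]
  have hinf : (fun l => V l (q l)) ⊓ mixedPt V A i p = fun l => V l (p l) := by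
    funext l
    by_cases hl : l = i
    · simp [mixedPt, hl, hVpq i]
    · simp [mixedPt, hl, hq l hl, hVA l _ (hpn l)]
  have h := hφ _ (mixedPt_self V i q ▸ mixedPt_mem_Icc hqn hVbox hVbox i) _
    (mixedPt_mem_Icc hpn hVbox hAbox i)
  rw [hsup, hinf] at h
  linarith

lemma SupermodularOn.mixedPt_sub_mixedPt_le (hφ : SupermodularOn φ (Set.Icc lo hi))
    {U V A : ι → ℕ → ℝ} {j : ι} (hpq : p ≤ q) (hj : q j = p j) (hqn : ∀ l, q l ≤ n)
    (hUV : ∀ l, ∀ k ≤ n, U l k ≤ V l k) (hA : ∀ l, MonotoneOn (A l) (Set.Iic n))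
    (hUbox : ∀ l, ∀ k ≤ n, U l k ∈ Set.Icc (lo l) (hi l))
    (hVbox : ∀ l, ∀ k ≤ n, V l k ∈ Set.Icc (lo l) (hi l))
    (hAbox : ∀ l, ∀ k ≤ n, A l k ∈ Set.Icc (lo l) (hi l)) :
    φ (mixedPt V A j p) - φ (mixedPt U A j p) ≤
      φ (mixedPt V A j q) - φ (mixedPt U A j q) := by
  have hpn : ∀ l, p l ≤ n := fun l => (hpq l).trans (hqn l)
  have hApq : ∀ l, A l (p l) ≤ A l (q l) := fun l => hA l (hpn l) (hqn l) (hpq l)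
  have hsup : mixedPt U A j q ⊔ mixedPt V A j p = mixedPt V A j q := by
    funext l
    by_cases hl : l = j
    · subst hl
      simp [mixedPt, hj, hUV l _ (hpn l)]
    · simp [mixedPt, hl, hApq l]
  have hinf : mixedPt U A j q ⊓ mixedPt V A j p = mixedPt U A j p := by
    funext l
    by_cases hl : l = j
    · subst hl
      simp [mixedPt, hj, hUV l _ (hpn l)]
    · simp [mixedPt, hl, hApq l]
  have h := hφ _ (mixedPt_mem_Icc hqn hUbox hAbox j) _ (mixedPt_mem_Icc hpn hVbox hAbox j)
  rw [hsup, hinf] at h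
  linarith

end MixedPoint

section Staircase

variable {d n : ℕ} {ω : Fin (d * n) → Fin d}

lemma gridPt_zero : gridPt d n ω 0 = 0 := by
  funext i
  simp [gridPt]

lemma gridPt_mono : Monotone (gridPt d n ω) := fun _ _ hst _ =>
  card_le_card (monotone_filter_right _ fun _ _ => And.imp_left fun h => h.trans_le hst)

lemma gridPt_succ_of_ne (t : Fin (d * n)) {l : Fin d} (hl : l ≠ ω t) :
    gridPt d n ω ((t : ℕ) + 1) l = gridPt d n ω t l := by
  unfold gridPt
  congr 1
  ext s
  simp only [mem_filter, mem_univ, true_and, and_congr_left_iff]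
  rintro rfl
  refine ⟨fun hs => (Nat.lt_succ_iff.mp hs).lt_of_ne fun h => hl ?_, Nat.lt_succ_of_lt⟩
  rw [Fin.ext h]

lemma gridPt_le (hω : IsDirVec d n ω) (t : ℕ) (i : Fin d) : gridPt d n ω t i ≤ n :=
  (card_le_card (monotone_filter_right _ fun _ _ => And.right)).trans (hω i).le

lemma gridPt_top (hω : IsDirVec d n ω) : gridPt d n ω (d * n) = fun _ => n := by
  funext i
  refine (congrArg card ?_).trans (hω i)
  ext t
  simp

lemma Bstep_eq_sum_mixedPt (φ : (Fin d → ℝ) → ℝ) (u a : Fin d → ℕ → ℝ) :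
    Bstep d n φ ω u a = φ (fun i => a i 0) + ∑ t : Fin (d * n),
      (φ (mixedPt u a (ω t) (gridPt d n ω ((t : ℕ) + 1))) -
        φ (mixedPt u a (ω t) (gridPt d n ω t))) :=
  rfl

variable {φ : (Fin d → ℝ) → ℝ} {lo hi : Fin d → ℝ}

theorem SupermodularOn.apply_le_Bstep (hφ : SupermodularOn φ (Set.Icc lo hi))
    (hω : IsDirVec d n ω) {V A : Fin d → ℕ → ℝ}
    (hV : ∀ i, MonotoneOn (V i) (Set.Iic n)) (hVA : ∀ i, ∀ k ≤ n, V i k ≤ A i k)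
    (hVbox : ∀ i, ∀ k ≤ n, V i k ∈ Set.Icc (lo i) (hi i))
    (hAbox : ∀ i, ∀ k ≤ n, A i k ∈ Set.Icc (lo i) (hi i)) (hV0 : ∀ i, V i 0 = A i 0) :
    φ (fun i => V i n) ≤ Bstep d n φ ω V A := by
  have hstep (t : Fin (d * n)) := hφ.sub_le_sub_mixedPt (i := ω t)
    (gridPt_mono (Nat.le_add_right t 1)) (fun _ => gridPt_succ_of_ne t) (gridPt_le hω _)
    hV hVA hVbox hAbox
  have hsum := sum_le_sum fun t (_ : t ∈ univ) => hstep t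
  rw [Fin.sum_univ_sub_telescope (fun s => φ (fun l => V l (gridPt d n ω s l)))] at hsum
  simp only [gridPt_top hω, gridPt_zero, Pi.zero_apply, hV0] at hsum
  rw [Bstep_eq_sum_mixedPt]
  linarith

theorem SupermodularOn.Bstep_le_Bstep_of_le (hφ : SupermodularOn φ (Set.Icc lo hi))
    (hω : IsDirVec d n ω) {U V A : Fin d → ℕ → ℝ}
    (hUV : ∀ i, ∀ k ≤ n, U i k ≤ V i k) (hA : ∀ i, MonotoneOn (A i) (Set.Iic n))
    (hUbox : ∀ i, ∀ k ≤ n, U i k ∈ Set.Icc (lo i) (hi i))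
    (hVbox : ∀ i, ∀ k ≤ n, V i k ∈ Set.Icc (lo i) (hi i))
    (hAbox : ∀ i, ∀ k ≤ n, A i k ∈ Set.Icc (lo i) (hi i))
    (hUV0 : ∀ i, U i 0 = V i 0) (hUVn : ∀ i, U i n = V i n) :
    Bstep d n φ ω V A ≤ Bstep d n φ ω U A := by
  set gap : ℕ → Fin d → ℝ := fun s j =>
    φ (mixedPt V A j (gridPt d n ω s)) - φ (mixedPt U A j (gridPt d n ω s)) with hgap
  have hgap_mono (t : Fin (d * n)) (j : Fin d) (hj : j ≠ ω t) : gap t j ≤ gap (t + 1) j :=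
    hφ.mixedPt_sub_mixedPt_le (gridPt_mono (Nat.le_add_right t 1)) (gridPt_succ_of_ne t hj)
      (gridPt_le hω _) hUV hA hUbox hVbox hAbox
  have hstep (t : Fin (d * n)) :
      gap (t + 1) (ω t) - gap t (ω t) ≤ ∑ j, gap (t + 1) j - ∑ j, gap t j := by
    rw [← sum_sub_distrib, ← add_sum_erase _ _ (mem_univ (ω t))]
    exact le_add_of_nonneg_right <| sum_nonneg fun j hj =>
      sub_nonneg.2 (hgap_mono t j (ne_of_mem_erase hj))
  have hsum := sum_le_sum fun t (_ : t ∈ univ) => hstep t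
  rw [Fin.sum_univ_sub_telescope (fun s => ∑ j, gap s j)] at hsum
  have hgap_zero (j : Fin d) : gap 0 j = 0 := by
    simp only [hgap, sub_eq_zero]
    exact congrArg φ (mixedPt_congr_left (by simp [gridPt_zero, hUV0]))
  have hgap_top (j : Fin d) : gap (d * n) j = 0 := by
    simp only [hgap, sub_eq_zero]
    exact congrArg φ (mixedPt_congr_left (by simp [gridPt_top hω, hUVn]))
  simp only [hgap_zero, hgap_top, sum_const_zero, sub_zero] at hsum
  have hdiff : ∑ t : Fin (d * n), (gap (t + 1) (ω t) - gap t (ω t)) =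
      Bstep d n φ ω V A - Bstep d n φ ω U A := by
    rw [Bstep_eq_sum_mixedPt, Bstep_eq_sum_mixedPt, add_sub_add_left_eq_sub, ← sum_sub_distrib]
    refine sum_congr rfl fun t _ => ?_
    simp only [hgap]
    ring
  linarith

end Staircase

theorem statement_0_general
    (d n m : ℕ)
    (X : Set (Fin m → ℝ)) (fL fU : Fin d → ℝ)
    (f : (Fin m → ℝ) → Fin d → ℝ) (φ : (Fin d → ℝ) → ℝ)
    (hsuper : ∀ y ∈ Set.Icc fL fU, ∀ z ∈ Set.Icc fL fU,
      φ y + φ z ≤ φ (y ⊔ z) + φ (y ⊓ z))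
    (u a : (Fin m → ℝ) → Fin d → ℕ → ℝ)
    (hf : ∀ x ∈ X, f x ∈ Set.Icc fL fU)
    (haL : ∀ x ∈ X, ∀ i, fL i ≤ a x i 0)
    (haMono : ∀ x ∈ X, ∀ i, ∀ j, j < n → a x i j ≤ a x i (j + 1))
    (haU : ∀ x ∈ X, ∀ i, a x i n ≤ fU i)
    (huL : ∀ x ∈ X, ∀ i, ∀ j, j ≤ n → fL i ≤ u x i j)
    (huf : ∀ x ∈ X, ∀ i, ∀ j, j ≤ n → u x i j ≤ f x i)
    (hua : ∀ x ∈ X, ∀ i, ∀ j, j ≤ n → u x i j ≤ a x i j)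
    (hu0 : ∀ x ∈ X, ∀ i, u x i 0 = a x i 0)
    (hun : ∀ x ∈ X, ∀ i, u x i n = f x i)
    (ω : Fin (d * n) → Fin d) (hω : IsDirVec d n ω)
    (x : Fin m → ℝ) (hx : x ∈ X) :
    φ (f x) ≤ Bstep d n φ ω (u x) (a x) := by
  have hφ : SupermodularOn φ (Set.Icc fL fU) := hsuper
  obtain ⟨hfL, hfU⟩ := hf x hx
  have ha : ∀ i, MonotoneOn (a x i) (Set.Iic n) := fun i =>
    monotoneOn_of_le_succ Set.ordConnected_Iic fun k _ _ hk => haMono x hx i k hk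
  have haBox (i : Fin d) (k : ℕ) (hk : k ≤ n) : a x i k ∈ Set.Icc (fL i) (fU i) :=
    ⟨(haL x hx i).trans (ha i (Nat.zero_le n) hk (Nat.zero_le k)),
      (ha i hk (le_refl n) hk).trans (haU x hx i)⟩
  set v : Fin d → ℕ → ℝ := fun i k => min (f x i) (a x i k)
  have hv0 (i : Fin d) : v i 0 = a x i 0 :=
    min_eq_right (hu0 x hx i ▸ huf x hx i 0 (Nat.zero_le n))
  have hvn (i : Fin d) : v i n = f x i := min_eq_left (hun x hx i ▸ hua x hx i n le_rfl)
  have hvBox (i : Fin d) (k : ℕ) (hk : k ≤ n) : v i k ∈ Set.Icc (fL i) (fU i) :=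
    ⟨le_min (hfL i) (haBox i k hk).1, (min_le_left _ _).trans (hfU i)⟩
  calc φ (f x) = φ (fun i => v i n) := by simp only [hvn]
    _ ≤ Bstep d n φ ω v (a x) := hφ.apply_le_Bstep hω (fun i => monotoneOn_const.min (ha i))
        (fun _ _ _ => min_le_right _ _) hvBox haBox hv0
    _ ≤ Bstep d n φ ω (u x) (a x) := hφ.Bstep_le_Bstep_of_le hω
        (fun i k hk => le_min (huf x hx i k hk) (hua x hx i k hk)) ha
        (fun i k hk => ⟨huL x hx i k hk, (huf x hx i k hk).trans (hfU i)⟩) hvBox haBox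
        (fun i => (hu0 x hx i).trans (hv0 i).symm) (fun i => (hun x hx i).trans (hvn i).symm)

theorem statement_0
    (d n m : ℕ) (hd : 1 ≤ d) (hn : 1 ≤ n)
    (X : Set (Fin m → ℝ)) (fL fU : Fin d → ℝ)
    (f : (Fin m → ℝ) → Fin d → ℝ) (φ : (Fin d → ℝ) → ℝ)
    (hsuper : ∀ y ∈ Set.Icc fL fU, ∀ z ∈ Set.Icc fL fU,
      φ y + φ z ≤ φ (y ⊔ z) + φ (y ⊓ z))
    (u a : (Fin m → ℝ) → Fin d → ℕ → ℝ)
    (hf : ∀ x ∈ X, f x ∈ Set.Icc fL fU)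
    (haL : ∀ x ∈ X, ∀ i, fL i ≤ a x i 0)
    (haMono : ∀ x ∈ X, ∀ i, ∀ j, j < n → a x i j ≤ a x i (j + 1))
    (haU : ∀ x ∈ X, ∀ i, a x i n ≤ fU i)
    (huL : ∀ x ∈ X, ∀ i, ∀ j, j ≤ n → fL i ≤ u x i j)
    (huf : ∀ x ∈ X, ∀ i, ∀ j, j ≤ n → u x i j ≤ f x i)
    (hua : ∀ x ∈ X, ∀ i, ∀ j, j ≤ n → u x i j ≤ a x i j)
    (hu0 : ∀ x ∈ X, ∀ i, u x i 0 = a x i 0)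
    (hun : ∀ x ∈ X, ∀ i, u x i n = f x i)
    (ω : Fin (d * n) → Fin d) (hω : IsDirVec d n ω)
    (x : Fin m → ℝ) (hx : x ∈ X) :
    φ (f x) ≤ Bstep d n φ ω (u x) (a x) :=
  statement_0_general d n m X fL fU f φ hsuper u a hf haL haMono haU huL huf hua hu0 hun ω hω x hx
end
end

section
/- Let φ : ℝ^d → ℝ be supermodular on the box [f^L,f^U] ⊆ ℝ^d and let ω be a permutation of {1,…,d}. For f ∈ [f^L,f^U] define G^ω(f) := φ(f^L) + Σ_{i=1}^d [ φ( Σ_{j=1}^{i−1} e_{ω_j} f^U_{ω_j} + e_{ω_i} f_{ω_i} + Σ_{j=i+1}^{d} e_{ω_j} f^L_{ω_j} ) − φ( Σ_{j=1}^{i−1} e_{ω_j} f^U_{ω_j} + Σ_{j=i}^{d} e_{ω_j} f^L_{ω_j} ) ], where e_i is the i-th standard unit vector. Then φ(f) ≤ G^ω(f) for every f ∈ [f^L,f^U]. If, in addition, φ is concave in each argument when the others are held fixed (i.e., for every i and every g ∈ [f^L,f^U], the map t ↦ φ(g + (t − g_i)e_i) is concave on [f^L_i, f^U_i]), then G^ω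 is a concave function on [f^L,f^U]. -/
/-! Order the coordinates by `ω` and move from `fL` to `f` one coordinate at a time. By
supermodularity, raising coordinate `ω i` from `fL` to `f` increases `φ` by at most as much as it
does once the earlier coordinates sit at `fU` instead of at `f`; telescoping gives `φ f ≤ G f`.
Each summand of `G` depends on `f` only through the single coordinate `f (ω i)`, so it is concave
whenever `φ` is concave in that coordinate, and `G` is a constant plus a sum of concave functions. -/

open Set Function

section Staircase

variable {d : ℕ} {β : Type*}

/-- The paper's `∑_{j<n} e_{ω_j} hi_{ω_j} + ∑_{j≥n} e_{ω_j} lo_{ω_j}`. -/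
def staircase (ω : Equiv.Perm (Fin d)) (lo hi : Fin d → β) (n : ℕ) : Fin d → β :=
  fun k => if (ω.symm k : ℕ) < n then hi k else lo k

variable (ω : Equiv.Perm (Fin d)) {lo hi f : Fin d → β}

@[simp]
theorem staircase_zero : staircase ω lo hi 0 = lo :=
  funext fun _ => if_neg (Nat.not_lt_zero _)

@[simp]
theorem staircase_dim : staircase ω lo hi d = hi :=
  funext fun k => if_pos (ω.symm k).isLt

theorem staircase_mem_Icc [Preorder β] {a b : Fin d → β} (hlo : lo ∈ Icc a b)
    (hhi : hi ∈ Icc a b) (n : ℕ) :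
    staircase ω lo hi n ∈ Icc a b := by
  constructor <;> intro k <;> unfold staircase <;> split
  exacts [hhi.1 k, hlo.1 k, hhi.2 k, hlo.2 k]

theorem staircase_update_eq (i : Fin d) :
    (fun k => if ω.symm k < i then hi k else if ω.symm k = i then f k else lo k) =
      update (staircase ω lo hi i) (ω i) (f (ω i)) := by
  funext k
  rcases eq_or_ne k (ω i) with rfl | hk
  · simp
  · have hne : ω.symm k ≠ i := fun h => hk (by rw [← h, Equiv.apply_symm_apply])
    simp [staircase, hk, hne]

theorem staircase_succ_sup_staircase [LinearOrder β] (hf : f ∈ Icc lo hi) (i : Fin d) :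
    staircase ω lo f (i + 1) ⊔ staircase ω lo hi i =
      update (staircase ω lo hi i) (ω i) (f (ω i)) := by
  rw [← staircase_update_eq]
  funext k
  simp only [staircase, Pi.sup_apply, Fin.lt_def, Fin.ext_iff]
  rcases lt_trichotomy (ω.symm k : ℕ) i with h | h | h
  · simp [h, Nat.lt_succ_of_lt h, hf.2 k]
  · simp [h, hf.1 k]
  · simp [h.not_gt, h.ne', (Nat.succ_le_of_lt h).not_gt]

theorem staircase_succ_inf_staircase [LinearOrder β] (hf : f ∈ Icc lo hi) (i : Fin d) :
    staircase ω lo f (i + 1) ⊓ staircase ω lo hi i = staircase ω lo f i := by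
  funext k
  simp only [staircase, Pi.inf_apply]
  rcases lt_trichotomy (ω.symm k : ℕ) i with h | h | h
  · simp [h, Nat.lt_succ_of_lt h, hf.2 k]
  · simp [h, hf.1 k]
  · simp [h.not_gt, (Nat.succ_le_of_lt h).not_gt]

end Staircase

section Supermodular

variable {d : ℕ} {β : Type*} [LinearOrder β] {φ : (Fin d → β) → ℝ} {lo hi f : Fin d → β}

theorem apply_staircase_succ_sub_le (ω : Equiv.Perm (Fin d))
    (hsuper : ∀ y ∈ Icc lo hi, ∀ z ∈ Icc lo hi, φ y + φ z ≤ φ (y ⊔ z) + φ (y ⊓ z))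
    (hf : f ∈ Icc lo hi) (i : Fin d) :
    φ (staircase ω lo f (i + 1)) - φ (staircase ω lo f i) ≤
      φ (update (staircase ω lo hi i) (ω i) (f (ω i))) - φ (staircase ω lo hi i) := by
  have hlo : lo ∈ Icc lo hi := ⟨le_rfl, hf.1.trans hf.2⟩
  have hhi : hi ∈ Icc lo hi := ⟨hf.1.trans hf.2, le_rfl⟩
  have h := hsuper _ (staircase_mem_Icc ω hlo hf (i + 1)) _ (staircase_mem_Icc ω hlo hhi i)
  rw [staircase_succ_sup_staircase ω hf, staircase_succ_inf_staircase ω hf] at h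
  linarith

theorem apply_le_add_sum_update_staircase (ω : Equiv.Perm (Fin d))
    (hsuper : ∀ y ∈ Icc lo hi, ∀ z ∈ Icc lo hi, φ y + φ z ≤ φ (y ⊔ z) + φ (y ⊓ z))
    (hf : f ∈ Icc lo hi) :
    φ f ≤ φ lo + ∑ i : Fin d,
      (φ (update (staircase ω lo hi i) (ω i) (f (ω i))) - φ (staircase ω lo hi i)) := by
  have htel : ∑ i : Fin d, (φ (staircase ω lo f (i + 1)) - φ (staircase ω lo f i)) =
      φ f - φ lo := by
    rw [Fin.sum_univ_eq_sum_range (fun n => φ (staircase ω lo f (n + 1)) - φ (staircase ω lo f n)),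
      Finset.sum_range_sub (fun n => φ (staircase ω lo f n)), staircase_dim, staircase_zero]
  have := Finset.sum_le_sum fun i (_ : i ∈ Finset.univ) =>
    apply_staircase_succ_sub_le ω hsuper hf i
  linarith

end Supermodular

section Concave

variable {ι E : Type*} [AddCommMonoid E] [Module ℝ E]

theorem ConcaveOn.finset_sum {s : Set E} (hs : Convex ℝ s) (t : Finset ι) {g : ι → E → ℝ}
    (hg : ∀ i ∈ t, ConcaveOn ℝ s (g i)) : ConcaveOn ℝ s fun x => ∑ i ∈ t, g i x := by
  simp_rw [← Finset.sum_apply]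
  exact Finset.sum_induction g (ConcaveOn ℝ s) (fun _ _ => ConcaveOn.add)
    (concaveOn_const 0 hs) hg

theorem ConcaveOn.comp_apply_Icc {lo hi : ι → ℝ} {ψ : ℝ → ℝ} (i : ι)
    (hψ : ConcaveOn ℝ (Icc (lo i) (hi i)) ψ) : ConcaveOn ℝ (Icc lo hi) fun f => ψ (f i) :=
  (hψ.comp_linearMap (LinearMap.proj (R := ℝ) (φ := fun _ : ι => ℝ) i)).subset
    (fun _ hf => ⟨hf.1 i, hf.2 i⟩) (convex_Icc lo hi)

end Concave

theorem statement_2_general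
    (d : ℕ)
    (fL fU : Fin d → ℝ) (φ : (Fin d → ℝ) → ℝ)
    (hsuper : ∀ y ∈ Set.Icc fL fU, ∀ z ∈ Set.Icc fL fU,
      φ y + φ z ≤ φ (y ⊔ z) + φ (y ⊓ z))
    (ω : Equiv.Perm (Fin d))
    (G : (Fin d → ℝ) → ℝ)
    (hG : ∀ f : Fin d → ℝ, G f =
      φ fL + ∑ i : Fin d,
        (φ (fun k => if ω.symm k < i then fU k else if ω.symm k = i then f k else fL k) -
          φ (fun k => if ω.symm k < i then fU k else fL k))) :
    (∀ f ∈ Set.Icc fL fU, φ f ≤ G f) ∧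
    ((∀ i : Fin d, ∀ g ∈ Set.Icc fL fU,
        ConcaveOn ℝ (Set.Icc (fL i) (fU i)) (fun t => φ (Function.update g i t))) →
      ConcaveOn ℝ (Set.Icc fL fU) G) := by
  have hG' : G = fun f => φ fL + ∑ i : Fin d,
      (φ (update (staircase ω fL fU i) (ω i) (f (ω i))) - φ (staircase ω fL fU i)) := by
    funext f
    simp_rw [hG, staircase_update_eq]
    rfl
  refine ⟨fun f hf => hG' ▸ apply_le_add_sum_update_staircase ω hsuper hf, fun hconc => ?_⟩
  rcases (Icc fL fU).eq_empty_or_nonempty with hempty | ⟨f₀, hf₀⟩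
  · rw [hempty]
    exact ⟨convex_empty, by simp⟩
  have hlo : fL ∈ Icc fL fU := ⟨le_rfl, hf₀.1.trans hf₀.2⟩
  have hhi : fU ∈ Icc fL fU := ⟨hf₀.1.trans hf₀.2, le_rfl⟩
  rw [hG']
  refine (concaveOn_const _ (convex_Icc fL fU)).add
    (ConcaveOn.finset_sum (convex_Icc fL fU) _ fun i _ => ?_)
  exact (ConcaveOn.comp_apply_Icc (ω i) (hconc (ω i) _ (staircase_mem_Icc ω hlo hhi i))).sub
    (convexOn_const _ (convex_Icc fL fU))

theorem statement_2
    (d : ℕ) (hd : 1 ≤ d)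
    (fL fU : Fin d → ℝ) (φ : (Fin d → ℝ) → ℝ)
    (hsuper : ∀ y ∈ Set.Icc fL fU, ∀ z ∈ Set.Icc fL fU,
      φ y + φ z ≤ φ (y ⊔ z) + φ (y ⊓ z))
    (ω : Equiv.Perm (Fin d))
    (G : (Fin d → ℝ) → ℝ)
    (hG : ∀ f : Fin d → ℝ, G f =
      φ fL + ∑ i : Fin d,
        (φ (fun k => if ω.symm k < i then fU k else if ω.symm k = i then f k else fL k) -
          φ (fun k => if ω.symm k < i then fU k else fL k))) :
    (∀ f ∈ Set.Icc fL fU, φ f ≤ G f) ∧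
    ((∀ i : Fin d, ∀ g ∈ Set.Icc fL fU,
        ConcaveOn ℝ (Set.Icc (fL i) (fU i)) (fun t => φ (Function.update g i t))) →
      ConcaveOn ℝ (Set.Icc fL fU) G) :=
  statement_2_general d fL fU φ hsuper ω G hG
end
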